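/- Let [a₁,…,a_r] and [b₁,…,b_s] be conjugate Hirzebruch–Jung strings (equal to n/a and n/(n−a) for some coprime 0 < a < n), and let t ≥ 0. Then the conjugate of the string [a_r,…,a₁, t+2, b₁,…,b_s] is a T_{t+1}-string. -/

import Mathlib

/-- The Hirzebruch–Jung continued fraction `[b₁,…,b_r] = b₁ − 1/(b₂ − 1/(⋯ − 1/b_r))`,
evaluated in `ℚ` (using the convention `1/0 = 0`, so `hj [b] = b`). -/
def hj : List ℕ → ℚ
  | [] => 0
  | b :: l => (b : ℚ) - 1 / hj l

/-- `TString d l` : the list `l` is a `T_d`-string, generated inductively. -/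
inductive TString : ℕ → List ℕ → Prop
  | base₁ : TString 1 [4]
  | base (d : ℕ) (hd : 2 ≤ d) : TString d (3 :: (List.replicate (d - 2) 2 ++ [3]))
  | left (d b : ℕ) (l : List ℕ) (h : TString d (b :: l)) :
      TString d ((b + 1) :: (l ++ [2]))
  | right (d b : ℕ) (l : List ℕ) (h : TString d (l ++ [b])) :
      TString d (2 :: (l ++ [b + 1]))

/-!
Encode a string `[b₁,…,b_r]` by the product of the matrices `!![bᵢ, -1; 1, 0]`: its first column
is the numerator and denominator of the continued fraction, in lowest terms because the
determinant is `1`. If the wings are `n/a` and `n/(n-a)`, and `n/y` is the fraction of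
`[a_r,…,a₁]`, the matrix of the wing string has first column `((t+1)n², (t+1)ny + 1)`, so its
conjugate is the `T_{t+1}`-fraction `(t+1)n² / ((t+1)n(n-y) - 1)`. On matrices, the two moves
generating `T`-strings are the steps of the Euclidean algorithm on `(n-y, y)`, so every such
fraction is that of a `T_{t+1}`-string, and a string with entries `≥ 2` is determined by its
fraction.
-/

lemma one_lt_hj {l : List ℕ} (hl : ∀ x ∈ l, 2 ≤ x) (hne : l ≠ []) : 1 < hj l := by
  induction l with
  | nil => exact absurd rfl hne
  | cons b l ih =>
    have hb : (2 : ℚ) ≤ b := by exact_mod_cast hl b List.mem_cons_self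
    have htail : 1 / hj l < 1 := by
      rcases eq_or_ne l [] with rfl | hl'
      · simp [hj]
      · have := ih (fun x hx => hl x (List.mem_cons_of_mem b hx)) hl'
        exact (div_lt_one (by linarith)).2 this
    rw [hj]
    linarith

lemma one_div_hj_mem_Ico {l : List ℕ} (hl : ∀ x ∈ l, 2 ≤ x) : 1 / hj l ∈ Set.Ico 0 1 := by
  rcases eq_or_ne l [] with rfl | hne
  · simp [hj]
  · have := one_lt_hj hl hne
    exact ⟨by positivity, (div_lt_one (by linarith)).2 this⟩

lemma ceil_hj_cons {b : ℕ} {l : List ℕ} (hl : ∀ x ∈ l, 2 ≤ x) : ⌈hj (b :: l)⌉ = b := by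
  obtain ⟨h0, h1⟩ := one_div_hj_mem_Ico hl
  rw [hj, Int.ceil_eq_iff]
  push_cast
  constructor <;> linarith

lemma hj_injOn : Set.InjOn hj {l | ∀ x ∈ l, 2 ≤ x} := by
  intro l₁ h₁ l₂ h₂ h
  induction l₁ generalizing l₂ with
  | nil =>
    cases l₂ with
    | nil => rfl
    | cons b l => linarith [one_lt_hj h₂ (List.cons_ne_nil b l), show hj [] = 0 from rfl]
  | cons b l ih =>
    cases l₂ with
    | nil => linarith [one_lt_hj h₁ (List.cons_ne_nil b l), show hj [] = 0 from rfl]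
    | cons b' l' =>
      have hl : ∀ x ∈ l, 2 ≤ x := fun x hx => h₁ x (List.mem_cons_of_mem b hx)
      have hl' : ∀ x ∈ l', 2 ≤ x := fun x hx => h₂ x (List.mem_cons_of_mem b' hx)
      have hb : b = b' := by
        have := (ceil_hj_cons hl).symm.trans ((congrArg _ h).trans (ceil_hj_cons hl'))
        exact_mod_cast this
      subst hb
      have htail : hj l = hj l' := by simpa [hj] using h
      rw [ih hl hl' htail]

open Matrix

def hjMatrix (b : ℕ) : Matrix (Fin 2) (Fin 2) ℤ := !![(b : ℤ), -1; 1, 0]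

def stringMatrix (l : List ℕ) : Matrix (Fin 2) (Fin 2) ℤ := (l.map hjMatrix).prod

@[simp] lemma stringMatrix_nil : stringMatrix [] = 1 := rfl

@[simp] lemma stringMatrix_cons (b : ℕ) (l : List ℕ) :
    stringMatrix (b :: l) = hjMatrix b * stringMatrix l := rfl

lemma stringMatrix_append (l₁ l₂ : List ℕ) :
    stringMatrix (l₁ ++ l₂) = stringMatrix l₁ * stringMatrix l₂ := by
  simp [stringMatrix]

lemma det_stringMatrix (l : List ℕ) : (stringMatrix l).det = 1 := by
  induction l with
  | nil => simp
  | cons b l ih => rw [stringMatrix_cons, det_mul, ih, hjMatrix, det_fin_two_of]; ring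

lemma hjMatrix_mul (b : ℕ) (M : Matrix (Fin 2) (Fin 2) ℤ) :
    hjMatrix b * M = !![b * M 0 0 - M 1 0, b * M 0 1 - M 1 1; M 0 0, M 0 1] := by
  rw [eta_fin_two M, hjMatrix, mul_fin_two]
  simp [sub_eq_add_neg]

lemma stringMatrix_reverse (l : List ℕ) :
    stringMatrix l.reverse =
      !![stringMatrix l 0 0, -stringMatrix l 1 0; -stringMatrix l 0 1, stringMatrix l 1 1] := by
  induction l with
  | nil => simp [one_fin_two]
  | cons b l ih =>
    rw [List.reverse_cons, stringMatrix_append, ih, stringMatrix_cons b l, hjMatrix_mul]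
    simp only [stringMatrix_cons, stringMatrix_nil, mul_one, hjMatrix, mul_fin_two]
    ext i j
    fin_cases i <;> fin_cases j <;> simp <;> ring

lemma stringMatrix_one_zero_nonneg_lt {l : List ℕ} (hl : ∀ x ∈ l, 2 ≤ x) :
    0 ≤ stringMatrix l 1 0 ∧ stringMatrix l 1 0 < stringMatrix l 0 0 := by
  induction l with
  | nil => simp
  | cons b l ih =>
    have hb : (2 : ℤ) ≤ b := by exact_mod_cast hl b List.mem_cons_self
    obtain ⟨h0, h1⟩ := ih fun x hx => hl x (List.mem_cons_of_mem b hx)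
    simp only [stringMatrix_cons, hjMatrix_mul, of_apply, cons_val', cons_val_zero, cons_val_one,
      empty_val', cons_val_fin_one]
    constructor <;> nlinarith

lemma hj_eq_div {l : List ℕ} (hl : ∀ x ∈ l, 2 ≤ x) :
    hj l = (stringMatrix l 0 0 : ℚ) / stringMatrix l 1 0 := by
  induction l with
  | nil => simp [hj]
  | cons b l ih =>
    have htail := fun x hx => hl x (List.mem_cons_of_mem b hx)
    obtain ⟨h0, h1⟩ := stringMatrix_one_zero_nonneg_lt htail
    have hp : (stringMatrix l 0 0 : ℚ) ≠ 0 := by exact_mod_cast (h0.trans_lt h1).ne'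
    rw [hj, ih htail, stringMatrix_cons, hjMatrix_mul]
    simp only [one_div, inv_div, of_apply, cons_val', cons_val_zero, cons_val_one, cons_val_fin_one,
      Int.cast_sub, Int.cast_mul, Int.cast_natCast]
    field_simp

lemma stringMatrix_one_zero_pos {l : List ℕ} (hl : ∀ x ∈ l, 2 ≤ x) (hne : l ≠ []) :
    0 < stringMatrix l 1 0 := by
  obtain ⟨b, l, rfl⟩ := List.exists_cons_of_ne_nil hne
  obtain ⟨h0, h1⟩ := stringMatrix_one_zero_nonneg_lt fun x hx => hl x (List.mem_cons_of_mem b hx)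
  simpa [hjMatrix_mul] using h0.trans_lt h1

lemma isCoprime_stringMatrix (l : List ℕ) :
    IsCoprime (stringMatrix l 0 0) (stringMatrix l 1 0) :=
  ⟨stringMatrix l 1 1, -stringMatrix l 0 1, by
    linear_combination (det_fin_two (stringMatrix l)).symm.trans (det_stringMatrix l)⟩

lemma stringMatrix_col_eq_of_hj_eq {l : List ℕ} (hl : ∀ x ∈ l, 2 ≤ x) (hne : l ≠ []) {p q : ℤ}
    (hq : 0 < q) (hpq : IsCoprime p q) (h : hj l = p / q) :
    stringMatrix l 0 0 = p ∧ stringMatrix l 1 0 = q :=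
  Rat.div_int_inj (stringMatrix_one_zero_pos hl hne) hq
    (Int.isCoprime_iff_gcd_eq_one.mp (isCoprime_stringMatrix l))
    (Int.isCoprime_iff_gcd_eq_one.mp hpq) ((hj_eq_div hl).symm.trans h)

lemma stringMatrix_succ_cons_append_two (b : ℕ) (l : List ℕ) :
    stringMatrix ((b + 1) :: (l ++ [2])) = !![1, 1; 0, 1] * stringMatrix (b :: l) * hjMatrix 2 := by
  simp only [stringMatrix_cons, stringMatrix_append, stringMatrix_nil, mul_one]
  rw [eta_fin_two (stringMatrix l)]
  simp only [hjMatrix, mul_fin_two]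
  ext i j
  fin_cases i <;> fin_cases j <;> simp <;> ring

lemma stringMatrix_two_cons_append_succ (b : ℕ) (l : List ℕ) :
    stringMatrix (2 :: (l ++ [b + 1])) = hjMatrix 2 * stringMatrix (l ++ [b]) * !![1, 0; -1, 1] := by
  simp only [stringMatrix_cons, stringMatrix_append, stringMatrix_nil, mul_one]
  rw [eta_fin_two (stringMatrix l)]
  simp only [hjMatrix, mul_fin_two]
  ext i j
  fin_cases i <;> fin_cases j <;> simp <;> ring

lemma stringMatrix_replicate_two (j : ℕ) :
    stringMatrix (List.replicate j 2) = !![(j : ℤ) + 1, -j; j, 1 - j] := by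
  induction j with
  | zero => simp [one_fin_two]
  | succ j ih =>
    rw [List.replicate_succ, stringMatrix_cons, ih, hjMatrix_mul]
    ext i j
    fin_cases i <;> fin_cases j <;> simp <;> ring

lemma TString.two_le {d : ℕ} {l : List ℕ} (h : TString d l) : ∀ x ∈ l, 2 ≤ x := by
  induction h with
  | base₁ => simp
  | base d hd => grind
  | left d b l h ih => have := ih b List.mem_cons_self; grind
  | right d b l h ih => have := ih b (by simp); grind

lemma TString.ne_nil {d : ℕ} {l : List ℕ} (h : TString d l) : l ≠ [] := by
  cases h <;> simp

/-- The matrix of the `T_d`-string with fraction `d n² / (d n a - 1)`, where `n = a + a'`. -/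
def tMatrix (d a a' : ℤ) : Matrix (Fin 2) (Fin 2) ℤ :=
  !![d * (a + a') ^ 2, 1 - d * (a + a') * a'; d * (a + a') * a - 1, 1 - d * a * a']

lemma tMatrix_left (d a a' : ℤ) :
    !![1, 1; 0, 1] * tMatrix d a a' * hjMatrix 2 = tMatrix d a (a + a') := by
  simp only [tMatrix, hjMatrix, mul_fin_two]
  ext i j
  fin_cases i <;> fin_cases j <;> simp <;> ring

lemma tMatrix_right (d a a' : ℤ) :
    hjMatrix 2 * tMatrix d a a' * !![1, 0; -1, 1] = tMatrix d (a + a') a' := by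
  simp only [tMatrix, hjMatrix, mul_fin_two]
  ext i j
  fin_cases i <;> fin_cases j <;> simp <;> ring

lemma stringMatrix_four : stringMatrix [4] = tMatrix 1 1 1 := by
  simp only [stringMatrix_cons, stringMatrix_nil, mul_one, tMatrix, hjMatrix]
  norm_num

lemma stringMatrix_three_replicate_two_three (j : ℕ) :
    stringMatrix (3 :: (List.replicate j 2 ++ [3])) = tMatrix (j + 2) 1 1 := by
  simp only [stringMatrix_cons, stringMatrix_append, stringMatrix_replicate_two, stringMatrix_nil,
    mul_one, tMatrix, hjMatrix, mul_fin_two]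
  ext i j
  fin_cases i <;> fin_cases j <;> simp <;> ring

lemma exists_tString_stringMatrix_eq_tMatrix {d : ℕ} (hd : 1 ≤ d) {a a' : ℕ} (ha : 0 < a)
    (ha' : 0 < a') (hcop : Nat.Coprime a a') :
    ∃ C, TString d C ∧ stringMatrix C = tMatrix d a a' := by
  induction hn : a + a' using Nat.strong_induction_on generalizing a a' with
  | _ n ih =>
  subst hn
  rcases lt_trichotomy a a' with hlt | rfl | hlt
  · obtain ⟨c, rfl⟩ := Nat.exists_eq_add_of_le hlt.le
    obtain ⟨C, hC, hM⟩ :=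
      ih (a + c) (by omega) ha (by omega) (Nat.coprime_self_add_right.mp hcop) rfl
    obtain ⟨b, L, rfl⟩ := List.exists_cons_of_ne_nil hC.ne_nil
    refine ⟨_, hC.left, ?_⟩
    rw [stringMatrix_succ_cons_append_two, hM, tMatrix_left]
    push_cast; rfl
  · obtain rfl : a = 1 := (Nat.coprime_self a).mp hcop
    match d, hd with
    | 1, _ => exact ⟨[4], TString.base₁, stringMatrix_four⟩
    | j + 2, _ =>
      refine ⟨_, TString.base (j + 2) (by omega), ?_⟩
      simpa using stringMatrix_three_replicate_two_three j
  · obtain ⟨c, rfl⟩ := Nat.exists_eq_add_of_le' hlt.le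
    obtain ⟨C, hC, hM⟩ :=
      ih (c + a') (by omega) (by omega) ha' (Nat.coprime_add_self_left.mp hcop) rfl
    obtain ⟨L, b, rfl⟩ := (List.eq_nil_or_concat' C).resolve_left hC.ne_nil
    refine ⟨_, hC.right, ?_⟩
    rw [stringMatrix_two_cons_append_succ, hM, tMatrix_right]
    push_cast; rfl

lemma tString_of_hj_eq {d : ℕ} (hd : 1 ≤ d) {C : List ℕ} (hC : ∀ x ∈ C, 2 ≤ x) {a a' : ℕ}
    (ha : 0 < a) (ha' : 0 < a') (hcop : Nat.Coprime a a')
    (h : hj C = ((d * (a + a') ^ 2 : ℤ) : ℚ) / ((d * (a + a') * a - 1 : ℤ) : ℚ)) :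
    TString d C := by
  obtain ⟨C₀, hT, hM⟩ := exists_tString_stringMatrix_eq_tMatrix hd ha ha' hcop
  have : hj C = hj C₀ := by
    rw [h, hj_eq_div hT.two_le, hM]
    simp [tMatrix]
  exact hj_injOn hC hT.two_le this ▸ hT

lemma stringMatrix_append_cons_col {R B : List ℕ} {n a : ℤ} (t : ℕ)
    (hR : stringMatrix R 0 0 = n ∧ stringMatrix R 0 1 = -a)
    (hB : stringMatrix B 0 0 = n ∧ stringMatrix B 1 0 = n - a) :
    stringMatrix (R ++ (t + 2) :: B) 0 0 = (t + 1) * n ^ 2 ∧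
      stringMatrix (R ++ (t + 2) :: B) 1 0 = (t + 1) * n * stringMatrix R 1 0 + 1 := by
  have hdet := (det_fin_two (stringMatrix R)).symm.trans (det_stringMatrix R)
  rw [stringMatrix_append, stringMatrix_cons, hjMatrix_mul]
  simp only [mul_apply, Fin.sum_univ_two, of_apply, cons_val', cons_val_zero, cons_val_one,
    empty_val', cons_val_fin_one, hR.1, hR.2, hB.1, hB.2] at hdet ⊢
  push_cast
  constructor
  · ring
  · linear_combination hdet

lemma stringMatrix_wing_col {A B : List ℕ} {n a : ℕ} (t : ℕ) (hA : ∀ x ∈ A, 2 ≤ x)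
    (hB : ∀ x ∈ B, 2 ≤ x) (hAne : A ≠ []) (hBne : B ≠ []) (ha : 0 < a) (han : a < n)
    (hcop : Nat.Coprime n a) (h1 : hj A = (n : ℚ) / a) (h2 : hj B = (n : ℚ) / ((n : ℚ) - a)) :
    ∃ y : ℕ, 0 < y ∧ y < n ∧ Nat.Coprime n y ∧
      stringMatrix (A.reverse ++ (t + 2) :: B) 0 0 = (t + 1) * n ^ 2 ∧
      stringMatrix (A.reverse ++ (t + 2) :: B) 1 0 = (t + 1) * n * y + 1 := by
  have hna : IsCoprime (n : ℤ) a := Nat.isCoprime_iff_coprime.mpr hcop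
  obtain ⟨hAn, hAa⟩ := stringMatrix_col_eq_of_hj_eq (p := n) (q := a) hA hAne
    (by exact_mod_cast ha) hna (by simpa using h1)
  have hBcol := stringMatrix_col_eq_of_hj_eq (p := n) (q := n - a) hB hBne (by omega)
    (by simpa [neg_add_eq_sub] using hna.neg_right.add_mul_left_right 1) (by simpa using h2)
  have hRrow : stringMatrix A.reverse 0 0 = n ∧ stringMatrix A.reverse 0 1 = -a := by
    simp [stringMatrix_reverse, hAn, hAa]
  have hR : ∀ x ∈ A.reverse, 2 ≤ x := by simpa using hA
  have hy0 := stringMatrix_one_zero_pos hR (by simpa using hAne)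
  obtain ⟨y, hy⟩ := Int.eq_ofNat_of_zero_le hy0.le
  have hyn : (y : ℤ) < n := hy ▸ hRrow.1 ▸ (stringMatrix_one_zero_nonneg_lt hR).2
  have hny : IsCoprime (n : ℤ) y := hy ▸ hRrow.1 ▸ isCoprime_stringMatrix A.reverse
  refine ⟨y, by omega, by omega, Nat.isCoprime_iff_coprime.mp hny, ?_⟩
  simpa [hy] using stringMatrix_append_cons_col t hRrow hBcol

theorem conjugate_of_wing_string_is_T_general (A B C : List ℕ) (n a m k t : ℕ)
    (hA : ∀ x ∈ A, 2 ≤ x) (hB : ∀ x ∈ B, 2 ≤ x) (hC : ∀ x ∈ C, 2 ≤ x)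
    (hAne : A ≠ []) (hBne : B ≠ [])
    (ha : 0 < a) (han : a < n) (hcop : Nat.gcd a n = 1)
    (h1 : hj A = (n : ℚ) / a)
    (h2 : hj B = (n : ℚ) / ((n : ℚ) - a))
    (hk : 0 < k) (hkcop : Nat.gcd k m = 1)
    (h3 : hj (A.reverse ++ (t + 2) :: B) = (m : ℚ) / k)
    (h4 : hj C = (m : ℚ) / ((m : ℚ) - k)) :
    TString (t + 1) C := by
  obtain ⟨y, hy0, hyn, hny, hW0, hW1⟩ :=
    stringMatrix_wing_col t hA hB hAne hBne ha han (Nat.coprime_comm.mp hcop) h1 h2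
  have hW : ∀ x ∈ A.reverse ++ (t + 2) :: B, 2 ≤ x := by grind
  obtain ⟨hWm, hWk⟩ := stringMatrix_col_eq_of_hj_eq (p := m) (q := k) hW (by simp)
    (by exact_mod_cast hk) (Nat.isCoprime_iff_coprime.mpr (Nat.coprime_comm.mp hkcop))
    (by simpa using h3)
  obtain ⟨c, rfl⟩ := Nat.exists_eq_add_of_le' hyn.le
  refine tString_of_hj_eq (a := c) (a' := y) (by omega) hC (by omega) hy0
    (Nat.coprime_add_self_left.mp hny) ?_
  have hm : (m : ℤ) = (t + 1) * (c + y) ^ 2 := by rw [← hWm, hW0]; push_cast; ring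
  have hk : (k : ℤ) = (t + 1) * (c + y) * y + 1 := by rw [← hWk, hW1]; push_cast; ring
  rw [h4, ← Int.cast_natCast m, ← Int.cast_natCast k, hm, hk]
  push_cast
  ring

/-- If `[a₁,…,a_r]` and `[b₁,…,b_s]` are conjugate strings (`= n/a` and `n/(n−a)`)
and `t ≥ 0`, then the conjugate of `[a_r,…,a₁, t+2, b₁,…,b_s]` is a `T_{t+1}`-string. -/
theorem conjugate_of_wing_string_is_T (A B C : List ℕ) (n a m k t : ℕ)
    (hA : ∀ x ∈ A, 2 ≤ x) (hB : ∀ x ∈ B, 2 ≤ x) (hC : ∀ x ∈ C, 2 ≤ x)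
    (hAne : A ≠ []) (hBne : B ≠ [])
    (ha : 0 < a) (han : a < n) (hcop : Nat.gcd a n = 1)
    (h1 : hj A = (n : ℚ) / a)
    (h2 : hj B = (n : ℚ) / ((n : ℚ) - a))
    (hk : 0 < k) (hkm : k < m) (hkcop : Nat.gcd k m = 1)
    (h3 : hj (A.reverse ++ (t + 2) :: B) = (m : ℚ) / k)
    (h4 : hj C = (m : ℚ) / ((m : ℚ) - k)) :
    TString (t + 1) C :=
  conjugate_of_wing_string_is_T_general A B C n a m k t hA hB hC hAne hBne ha han hcop h1 h2 hk
    hkcop h3 h4
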